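/- arXiv:2605.27996 — 2 statements merged into one kernel-verified Lean document; each statement's English description precedes it below -/
import Mathlib

section
/- There exist parameters (with K = 3 features, G = Σ having unit diagonal, G₁₂ = ρ, G₁₃ = σ₁₃, G₂₃ = 0) such that applying the canonical single-axis mitigation M₁ strictly increases the L² norm of the proxy reward: with (g₁,g₂,g₃) = (0.5, 1, 1), ρ = −0.6, σ₁₃ = −0.4, one has ‖M₁(R̃)‖² − ‖R̃‖² = 0.75 > 0. -/
open MeasureTheory Matrix

/-!
Since `g` solves the normal equations `G g = (⟪φₖ, R̃⟫)ₖ`, expanding the square gives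
`‖R̃ - g₁ φ₁‖² - ‖R̃‖² = g₁² G₁₁ - 2 g₁ (G g)₁ = -g₁ [g₁ G₁₁ + 2 (G₁₂ g₂ + G₁₃ g₃)]`.
With the given values the bracket is `1/2 - 2 = -3/2`, so the norm grows by `3/4`: the negative
correlations of `φ₁` with `φ₂, φ₃` make `R̃` and `φ₁` anticorrelated although `g₁ > 0`.
Indices are shifted in the code: `φ₁` is `Φ 0`.
-/

theorem integral_sub_const_mul_sq {Ω : Type*} [MeasurableSpace Ω] {μ : Measure Ω}
    {f φ : Ω → ℝ} (hf : MemLp f 2 μ) (hφ : MemLp φ 2 μ) (c : ℝ) :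
    ∫ ω, (f ω - c * φ ω) ^ 2 ∂μ
      = ∫ ω, f ω ^ 2 ∂μ - 2 * c * ∫ ω, φ ω * f ω ∂μ + c ^ 2 * ∫ ω, φ ω * φ ω ∂μ := by
  have hφf : Integrable (fun ω => φ ω * f ω) μ := hφ.integrable_mul hf
  have hφφ : Integrable (fun ω => φ ω * φ ω) μ := hφ.integrable_mul hφ
  calc ∫ ω, (f ω - c * φ ω) ^ 2 ∂μ
      = ∫ ω, (f ω ^ 2 - 2 * c * (φ ω * f ω) + c ^ 2 * (φ ω * φ ω)) ∂μ := by
        congr 1; ext ω; ring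
    _ = _ := by
        have hf2 : Integrable (fun ω => f ω ^ 2 - 2 * c * (φ ω * f ω)) μ :=
          hf.integrable_sq.sub (hφf.const_mul _)
        rw [integral_add hf2 (hφφ.const_mul _), integral_sub hf.integrable_sq (hφf.const_mul _),
          integral_const_mul, integral_const_mul]

theorem Matrix.mulVec_nonsing_inv_mulVec {n α : Type*} [Fintype n] [DecidableEq n] [CommRing α]
    {A : Matrix n n α} (hA : IsUnit A) (v : n → α) : A *ᵥ (A⁻¹ *ᵥ v) = v := by
  rw [mulVec_mulVec, mul_nonsing_inv _ ((isUnit_iff_isUnit_det A).mp hA), one_mulVec]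

theorem mitigation_norm_increase_general
    {Ω : Type*} [MeasurableSpace Ω] (μ : Measure Ω)
    (Φ : Fin 3 → Ω → ℝ) (Rt : Ω → ℝ)
    (hΦ : ∀ i, MemLp (Φ i) 2 μ) (hRt : MemLp Rt 2 μ)
    (G : Matrix (Fin 3) (Fin 3) ℝ)
    (hGdef : G = Matrix.of (fun i j => ∫ ω, Φ i ω * Φ j ω ∂μ))
    (hGval : G = !![1, -3/5, -2/5; -3/5, 1, 0; -2/5, 0, 1])
    (hGpd : G.PosDef)
    (g : Fin 3 → ℝ)
    (hg : g = G⁻¹ *ᵥ (fun k => ∫ ω, Φ k ω * Rt ω ∂μ))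
    (hgval : g = ![1/2, 1, 1])
    (R' : Ω → ℝ)
    (hR' : R' = fun ω => Rt ω - g 0 * Φ 0 ω) :
    (∫ ω, R' ω ^ 2 ∂μ) - (∫ ω, Rt ω ^ 2 ∂μ) = 3/4 ∧
      (∫ ω, Rt ω ^ 2 ∂μ) < ∫ ω, R' ω ^ 2 ∂μ := by
  have hnormal : (G *ᵥ g) 0 = ∫ ω, Φ 0 ω * Rt ω ∂μ := by
    rw [hg, mulVec_nonsing_inv_mulVec hGpd.isUnit]
  have hcross : ∫ ω, Φ 0 ω * Rt ω ∂μ = -1/2 := by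
    rw [← hnormal, hGval, hgval]
    norm_num [mulVec, dotProduct, Fin.sum_univ_three, cons_val, cons_val_two]
  have hunit : ∫ ω, Φ 0 ω * Φ 0 ω ∂μ = 1 := by
    simpa [hGval] using (congrFun (congrFun hGdef 0) 0).symm
  have hchange : (∫ ω, R' ω ^ 2 ∂μ) - (∫ ω, Rt ω ^ 2 ∂μ) = 3/4 := by
    rw [hR', integral_sub_const_mul_sq hRt (hΦ 0), hcross, hunit, hgval, cons_val_zero]
    ring
  exact ⟨hchange, by linarith⟩

/-- Norm increase under the canonical mitigation: with K = 3 features,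
Gram matrix G = Σ with unit diagonal, G₁₂ = ρ = −3/5, G₁₃ = σ₁₃ = −2/5, G₂₃ = 0, and
reliance (g₁,g₂,g₃) = (1/2, 1, 1), applying M₁ strictly increases the L² norm of the
proxy: ‖M₁(R̃)‖² − ‖R̃‖² = 3/4 > 0. -/
theorem mitigation_norm_increase
    {Ω : Type*} [MeasurableSpace Ω] (μ : Measure Ω) [IsProbabilityMeasure μ]
    (Φ : Fin 3 → Ω → ℝ) (Rt : Ω → ℝ)
    (hΦ : ∀ i, MemLp (Φ i) 2 μ) (hRt : MemLp Rt 2 μ)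
    (G : Matrix (Fin 3) (Fin 3) ℝ)
    (hGdef : G = Matrix.of (fun i j => ∫ ω, Φ i ω * Φ j ω ∂μ))
    (hGval : G = !![1, -3/5, -2/5; -3/5, 1, 0; -2/5, 0, 1])
    (hGpd : G.PosDef)
    (g : Fin 3 → ℝ)
    (hg : g = G⁻¹ *ᵥ (fun k => ∫ ω, Φ k ω * Rt ω ∂μ))
    (hgval : g = ![1/2, 1, 1])
    (R' : Ω → ℝ)
    (hR' : R' = fun ω => Rt ω - g 0 * Φ 0 ω) :
    (∫ ω, R' ω ^ 2 ∂μ) - (∫ ω, Rt ω ^ 2 ∂μ) = 3/4 ∧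
      (∫ ω, Rt ω ^ 2 ∂μ) < ∫ ω, R' ω ^ 2 ∂μ :=
  mitigation_norm_increase_general μ Φ Rt hΦ hRt G hGdef hGval hGpd g hg hgval R' hR'
end

section
/- Four-instance impossibility construction: with μ_diag = N(0, I₃), R̃(y) = y₁+y₂+y₃, R(y) = y₃, M₁(R̃)(y) = y₂+y₃, and four reference-policy covariances Σ^(k) (unit diagonal, Σ₂₃ = 0) given by (Σ₁₂,Σ₁₃) ∈ {(0,−1/2), (1/2,−1/2), (1/2,δ), (0,1/2)} for fixed 0 < δ < 1/2, each Σ^(k) is positive definite, and the resulting drift pairs (Δ₂, ΔJ) = (−Σ₁₂/β, −Σ₁₃/β) are respectively (0, 1/(2β)), (−1/(2β), 1/(2β)), (−1/(2β), −δ/β), (0, −1/(2β)): that is, they realize the sign patterns (Δ₂=0, ΔJ>0), (Δ₂≠0, ΔJ>0), (Δ₂≠0, ΔJ<0), (Δ₂=0, ΔJ<0). -/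
/-! The quadratic form of each covariance is
`(1 - ρ² - σ²) x₀² + (ρ x₀ + x₁)² + (σ x₀ + x₂)²`, positive definite as soon as `ρ² + σ² < 1`.
Since `c' - c = -e₀`, the drift `Σ (c' - c) / β` is minus the first column of `Σ` over `β`. -/

open Matrix

section UnitDiagonalCovariance

variable (ρ σ : ℝ)

lemma dotProduct_mulVec_unitDiag (x : Fin 3 → ℝ) :
    x ⬝ᵥ (!![1, ρ, σ; ρ, 1, 0; σ, 0, 1] *ᵥ x) =
      (1 - ρ ^ 2 - σ ^ 2) * x 0 ^ 2 + (ρ * x 0 + x 1) ^ 2 + (σ * x 0 + x 2) ^ 2 := by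
  simp [dotProduct, mulVec, Fin.sum_univ_three]
  ring

lemma posDef_unitDiag_of_sq_add_sq_lt_one (h : ρ ^ 2 + σ ^ 2 < 1) :
    (!![1, ρ, σ; ρ, 1, 0; σ, 0, 1] : Matrix (Fin 3) (Fin 3) ℝ).PosDef := by
  refine PosDef.of_dotProduct_mulVec_pos ?_ fun x hx => ?_
  · ext i j
    fin_cases i <;> fin_cases j <;> rfl
  rw [star_trivial, dotProduct_mulVec_unitDiag]
  by_cases h0 : x 0 = 0
  · have h12 : x 1 ≠ 0 ∨ x 2 ≠ 0 := by
      contrapose! hx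
      ext i
      fin_cases i <;> simp [h0, hx.1, hx.2]
    rw [h0]
    rcases h12 with h1 | h2
    · nlinarith [sq_pos_of_ne_zero h1, sq_nonneg (x 2)]
    · nlinarith [sq_pos_of_ne_zero h2, sq_nonneg (x 1)]
  · nlinarith [mul_pos (sub_pos.2 h) (sq_pos_of_ne_zero h0),
      sq_nonneg (ρ * x 0 + x 1), sq_nonneg (σ * x 0 + x 2)]

lemma unitDiag_mulVec_sub :
    !![1, ρ, σ; ρ, 1, 0; σ, 0, 1] *ᵥ (![0, 1, 1] - ![1, 1, 1]) = ![-1, -ρ, -σ] := by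
  ext i
  fin_cases i <;> simp [mulVec, dotProduct, Fin.sum_univ_three]

end UnitDiagonalCovariance

/-- Four-instance impossibility construction: with
R̃(y) = y₁+y₂+y₃ (coefficients c = (1,1,1)), M₁(R̃)(y) = y₂+y₃ (c' = (0,1,1)),
and four reference covariances Σ (unit diagonal, Σ₂₃ = 0) given by
(Σ₁₂,Σ₁₃) ∈ {(0,−1/2), (1/2,−1/2), (1/2,δ), (0,1/2)} with 0 < δ < 1/2, each Σ is
positive definite, and the drift pairs Δ₂ = (Σ(c'−c))₂/β, ΔJ = (Σ(c'−c))₃/β are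
respectively (0, 1/(2β)), (−1/(2β), 1/(2β)), (−1/(2β), −δ/β), (0, −1/(2β)),
realizing the sign patterns (Δ₂=0,ΔJ>0), (Δ₂≠0,ΔJ>0), (Δ₂≠0,ΔJ<0), (Δ₂=0,ΔJ<0). -/
theorem four_instance_construction
    (β δ : ℝ) (hβ : 0 < β) (hδ0 : 0 < δ) (hδ : δ < 1/2)
    (Sig : ℝ → ℝ → Matrix (Fin 3) (Fin 3) ℝ)
    (hSig : ∀ ρ σ : ℝ, Sig ρ σ = !![1, ρ, σ; ρ, 1, 0; σ, 0, 1])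
    (c c' : Fin 3 → ℝ) (hc : c = ![1, 1, 1]) (hc' : c' = ![0, 1, 1])
    (Δ₂ ΔJ : ℝ → ℝ → ℝ)
    (hΔ₂ : ∀ ρ σ, Δ₂ ρ σ = (Sig ρ σ *ᵥ (c' - c)) 1 / β)
    (hΔJ : ∀ ρ σ, ΔJ ρ σ = (Sig ρ σ *ᵥ (c' - c)) 2 / β) :
    ((Sig 0 (-(1/2))).PosDef ∧ (Sig (1/2) (-(1/2))).PosDef ∧
      (Sig (1/2) δ).PosDef ∧ (Sig 0 (1/2)).PosDef) ∧
    (Δ₂ 0 (-(1/2)) = 0 ∧ ΔJ 0 (-(1/2)) = 1/(2*β)) ∧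
    (Δ₂ (1/2) (-(1/2)) = -(1/(2*β)) ∧ ΔJ (1/2) (-(1/2)) = 1/(2*β)) ∧
    (Δ₂ (1/2) δ = -(1/(2*β)) ∧ ΔJ (1/2) δ = -(δ/β)) ∧
    (Δ₂ 0 (1/2) = 0 ∧ ΔJ 0 (1/2) = -(1/(2*β))) ∧
    ((Δ₂ 0 (-(1/2)) = 0 ∧ 0 < ΔJ 0 (-(1/2))) ∧
     (Δ₂ (1/2) (-(1/2)) ≠ 0 ∧ 0 < ΔJ (1/2) (-(1/2))) ∧
     (Δ₂ (1/2) δ ≠ 0 ∧ ΔJ (1/2) δ < 0) ∧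
     (Δ₂ 0 (1/2) = 0 ∧ ΔJ 0 (1/2) < 0)) := by
  have Δ₂_eq (ρ σ : ℝ) : Δ₂ ρ σ = -ρ / β := by
    rw [hΔ₂, hSig, hc, hc', unitDiag_mulVec_sub]
    rfl
  have ΔJ_eq (ρ σ : ℝ) : ΔJ ρ σ = -σ / β := by
    rw [hΔJ, hSig, hc, hc', unitDiag_mulVec_sub]
    rfl
  have hδ_sq : (1 / 2 : ℝ) ^ 2 + δ ^ 2 < 1 := by nlinarith
  simp only [hSig, Δ₂_eq, ΔJ_eq]
  refine ⟨⟨posDef_unitDiag_of_sq_add_sq_lt_one _ _ (by norm_num),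
    posDef_unitDiag_of_sq_add_sq_lt_one _ _ (by norm_num),
    posDef_unitDiag_of_sq_add_sq_lt_one _ _ hδ_sq,
    posDef_unitDiag_of_sq_add_sq_lt_one _ _ (by norm_num)⟩, ?_⟩
  have half_div : (1 / 2 : ℝ) / β = 1 / (2 * β) := by rw [div_div]
  norm_num [neg_div, half_div, hβ, hβ.ne', hδ0, div_pos]
end
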